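/- In Rep(𝔘_n): for all i, Hom(L_{3,i}, L_{3,i}) is 2-dimensional spanned by the identity and the matrix [[0,1],[0,0]]; for i > j, Hom(L_{3,i}, L_{3,j}) is spanned by [[0,1],[0,0]] and [[0,0],[0,1]]; for i < j, Hom(L_{3,i}, L_{3,j}) is spanned by [[1,0],[0,0]] and [[0,1],[0,0]]. Moreover for i > j, Hom(L_{1,i}, L_{3,j}) is spanned by the column maps (0,1)^t and (1,0)^t; for i ≤ j it is spanned by (1,0)^t alone; and Hom(L_{2,i}, L_{3,j}) ≠ 0 implies i < j, in which case it is spanned by (1,0)^t. -/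

import Mathlib

open scoped Classical

/-! ## Representations of the poset with involution `𝔘_n`
`𝔘_n` is the chain `a_n < ⋯ < a₁ < b₁ < ⋯ < b_n` with involution classes `z_i = (a_i, b_i)`
(indexed here by `Fin n`, `i : Fin n` corresponding to the class `(a_{i+1}, b_{i+1})`).
A representation is a finite-dimensional space `V₀` together with subspaces
`W i ⊆ V₀ × V₀` (coordinates = values at `a_i` and `b_i`) subject to the conditions
coming from the order:  `a_i < a_j` iff `j < i`, `a_i < b_j` always, `b_i < b_j` iff
`i < j`. -/

structure RepU (k : Type) [Field k] (n : ℕ) where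
  V0 : Type
  [acg : AddCommGroup V0]
  [mod : Module k V0]
  [fd : FiniteDimensional k V0]
  W : Fin n → Submodule k (V0 × V0)
  c1 : ∀ i j : Fin n, j < i → ∀ p ∈ W i, ((p.1, 0) : V0 × V0) ∈ W j
  c2 : ∀ i j : Fin n, ∀ p ∈ W i, ((0, p.1) : V0 × V0) ∈ W j
  c3 : ∀ i j : Fin n, i < j → ∀ p ∈ W i, ((0, p.2) : V0 × V0) ∈ W j

attribute [instance] RepU.acg RepU.mod RepU.fd

variable {k : Type} [Field k] {n : ℕ}

/-- Morphisms of representations of `𝔘_n`. -/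
@[ext]
structure HomU (V V' : RepU k n) where
  φ : V.V0 →ₗ[k] V'.V0
  maps : ∀ i : Fin n, ∀ p ∈ V.W i, ((φ p.1, φ p.2) : V'.V0 × V'.V0) ∈ V'.W i

namespace HomU

def comp {U V W : RepU k n} (g : HomU V W) (f : HomU U V) : HomU U W :=
  ⟨g.φ ∘ₗ f.φ, fun i p hp => g.maps i _ (f.maps i p hp)⟩

def idH (V : RepU k n) : HomU V V := ⟨LinearMap.id, fun _ _ hp => hp⟩

def zeroH (V V' : RepU k n) : HomU V V' :=
  ⟨0, fun i _ _ => by simp; exact (V'.W i).zero_mem⟩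

end HomU

/-- The trivial representation `S`. -/
def IsSU (V : RepU k n) : Prop :=
  Module.finrank k V.V0 = 1 ∧ ∀ j, V.W j = ⊥

/-- `V ≅ L_{1,i}`:  `V₀ = k⟨e⟩`, `W j = 0` for `j < i` and `W j = ⟨(0,e)⟩` for `j ≥ i`. -/
def IsL1U (V : RepU k n) (i : Fin n) : Prop :=
  ∃ e : V.V0, e ≠ 0 ∧ Submodule.span k {e} = ⊤ ∧
    ∀ j, V.W j = if j < i then ⊥ else Submodule.span k {((0, e) : V.V0 × V.V0)}

/-- `V ≅ L_{2,i}`:  `V₀ = k⟨e⟩`, `W j = ⟨(0,e),(e,0)⟩` for `j ≤ i`, `⟨(0,e)⟩` for `j > i`. -/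
def IsL2U (V : RepU k n) (i : Fin n) : Prop :=
  ∃ e : V.V0, e ≠ 0 ∧ Submodule.span k {e} = ⊤ ∧
    ∀ j, V.W j = if j ≤ i then Submodule.span k {((0, e) : V.V0 × V.V0), (e, 0)}
      else Submodule.span k {((0, e) : V.V0 × V.V0)}

/-- `V ≅ L_{3,i}`:  `V₀ = k⟨e₁,e₂⟩`, `W j = ⟨(0,e₁),(e₁,0)⟩` for `j < i`,
`⟨(0,e₁),(e₁,e₂)⟩` for `j = i`, `⟨(0,e₁),(0,e₂)⟩` for `j > i`. -/
def IsL3U (V : RepU k n) (i : Fin n) : Prop :=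
  ∃ e₁ e₂ : V.V0, LinearIndependent k ![e₁, e₂] ∧
    Submodule.span k {e₁, e₂} = ⊤ ∧
    ∀ j, V.W j =
      if j < i then Submodule.span k {((0, e₁) : V.V0 × V.V0), (e₁, 0)}
      else if j = i then Submodule.span k {((0, e₁) : V.V0 × V.V0), (e₁, e₂)}
      else Submodule.span k {((0, e₁) : V.V0 × V.V0), (0, e₂)}

/-- `V` is indecomposable:  nonzero, and its only idempotent endomorphisms are `0` and the
identity. -/
def IndecU (V : RepU k n) : Prop :=
  (∃ v : V.V0, v ≠ 0) ∧
    ∀ f : HomU V V, HomU.comp f f = f → f = HomU.zeroH V V ∨ f = HomU.idH V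

/-! Each of `L_{1,i}`, `L_{2,i}`, `L_{3,i}` is generated by one element of its subspace at
`z_i`, namely `(0, e)`, `(e, 0)` and `(e₁, e₂)`: the order conditions `c1`–`c3` of any
representation `B` carry the image of that element into every other subspace of `B`. So a
morphism from it to `B` amounts to a vector `w` with `(0, w) ∈ B.W i`, resp. `(w, 0) ∈ B.W i`,
resp. a pair with `(w₁, w₂) ∈ B.W i`, and the theorem reduces to reading off the subspaces
of `L_{3,j}` in the basis `f₁, f₂`. -/

section LinearAlgebra

variable {k M N : Type} [Field k] [AddCommGroup M] [Module k M] [AddCommGroup N] [Module k N]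

theorem prod_mem_of_mem_span (ψ : M →ₗ[k] N) {s : Set (M × M)} {Q : Submodule k (N × N)}
    (hs : ∀ q ∈ s, ((ψ q.1, ψ q.2) : N × N) ∈ Q) {p : M × M} (hp : p ∈ Submodule.span k s) :
    ((ψ p.1, ψ p.2) : N × N) ∈ Q :=
  (Submodule.span_le (p := Q.comap (ψ.prodMap ψ))).2 hs hp

theorem mem_span_zero_prod_pair_iff (u v w x y : M) :
    ((x, y) : M × M) ∈ Submodule.span k {((0, u) : M × M), (v, w)} ↔
      ∃ a b : k, x = a • v ∧ y = b • u + a • w := by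
  simp only [Submodule.mem_span_pair, Prod.ext_iff, Prod.fst_add, Prod.snd_add, Prod.smul_fst,
    Prod.smul_snd, smul_zero, zero_add]
  constructor
  · rintro ⟨b, a, hx, hy⟩
    exact ⟨a, b, hx.symm, hy.symm⟩
  · rintro ⟨a, b, hx, hy⟩
    exact ⟨b, a, hx.symm, hy.symm⟩

theorem exists_linearMap_eq_pair {u v : M} (hli : LinearIndependent k ![u, v])
    (hsp : Submodule.span k {u, v} = ⊤) (w₁ w₂ : N) :
    ∃ ψ : M →ₗ[k] N, ψ u = w₁ ∧ ψ v = w₂ := by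
  let b := Module.Basis.mk hli (by rw [Matrix.range_cons_cons_empty, hsp])
  refine ⟨b.constr k ![w₁, w₂], ?_, ?_⟩
  · simpa [b] using b.constr_basis k ![w₁, w₂] 0
  · simpa [b] using b.constr_basis k ![w₁, w₂] 1

theorem exists_linearMap_eq_single {u : M} (hu : u ≠ 0) (hsp : Submodule.span k {u} = ⊤)
    (w : N) : ∃ ψ : M →ₗ[k] N, ψ u = w := by
  let b := Module.Basis.mk (linearIndependent_unique_iff (R := k) (v := ![u]).2 hu) (by simp [hsp])
  exact ⟨b.constr k ![w], by simpa [b] using b.constr_basis k ![w] 0⟩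

end LinearAlgebra

def IsL1UBasis (V : RepU k n) (i : Fin n) (e : V.V0) : Prop :=
  e ≠ 0 ∧ Submodule.span k {e} = ⊤ ∧
    ∀ t, V.W t = if t < i then ⊥ else Submodule.span k {((0, e) : V.V0 × V.V0)}

def IsL2UBasis (V : RepU k n) (i : Fin n) (e : V.V0) : Prop :=
  e ≠ 0 ∧ Submodule.span k {e} = ⊤ ∧
    ∀ t, V.W t = if t ≤ i then Submodule.span k {((0, e) : V.V0 × V.V0), (e, 0)}
      else Submodule.span k {((0, e) : V.V0 × V.V0)}

def IsL3UBasis (V : RepU k n) (i : Fin n) (e₁ e₂ : V.V0) : Prop :=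
  LinearIndependent k ![e₁, e₂] ∧ Submodule.span k {e₁, e₂} = ⊤ ∧
    ∀ t, V.W t =
      if t < i then Submodule.span k {((0, e₁) : V.V0 × V.V0), (e₁, 0)}
      else if t = i then Submodule.span k {((0, e₁) : V.V0 × V.V0), (e₁, e₂)}
      else Submodule.span k {((0, e₁) : V.V0 × V.V0), (0, e₂)}

section UniversalProperties

variable {A B : RepU k n} {i : Fin n}

theorem IsL3UBasis.exists_homU_iff {e₁ e₂ : A.V0} (hA : IsL3UBasis A i e₁ e₂) {w₁ w₂ : B.V0} :
    (∃ φ : HomU A B, φ.φ e₁ = w₁ ∧ φ.φ e₂ = w₂) ↔ ((w₁, w₂) : B.V0 × B.V0) ∈ B.W i := by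
  obtain ⟨hli, hsp, hW⟩ := hA
  constructor
  · rintro ⟨φ, rfl, rfl⟩
    refine φ.maps i (e₁, e₂) ?_
    rw [hW i, if_neg (lt_irrefl i), if_pos rfl]
    exact Submodule.subset_span (by simp)
  · intro h
    obtain ⟨ψ, hψ₁, hψ₂⟩ := exists_linearMap_eq_pair hli hsp w₁ w₂
    refine ⟨⟨ψ, fun t p hp => ?_⟩, hψ₁, hψ₂⟩
    have h0 : ((0, w₁) : B.V0 × B.V0) ∈ B.W t := B.c2 i t _ h
    rw [hW t] at hp
    split_ifs at hp with hlt heq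
    · refine prod_mem_of_mem_span ψ ?_ hp
      rintro q (rfl | rfl) <;> simp only [map_zero, hψ₁]
      exacts [h0, B.c1 i t hlt _ h]
    · subst heq
      refine prod_mem_of_mem_span ψ ?_ hp
      rintro q (rfl | rfl) <;> simp only [map_zero, hψ₁, hψ₂]
      exacts [h0, h]
    · have hgt : i < t := lt_of_le_of_ne (not_lt.1 hlt) (Ne.symm heq)
      refine prod_mem_of_mem_span ψ ?_ hp
      rintro q (rfl | rfl) <;> simp only [map_zero, hψ₁, hψ₂]
      exacts [h0, B.c3 i t hgt _ h]

theorem IsL1UBasis.exists_homU_iff {e : A.V0} (hA : IsL1UBasis A i e) {w : B.V0} :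
    (∃ φ : HomU A B, φ.φ e = w) ↔ ((0, w) : B.V0 × B.V0) ∈ B.W i := by
  obtain ⟨he, hsp, hW⟩ := hA
  constructor
  · rintro ⟨φ, rfl⟩
    rw [← map_zero φ.φ]
    exact φ.maps i (0, e) (by simp [hW i])
  · intro h
    obtain ⟨ψ, hψ⟩ := exists_linearMap_eq_single he hsp w
    refine ⟨⟨ψ, fun t p hp => ?_⟩, hψ⟩
    rw [hW t] at hp
    split_ifs at hp with hlt
    · rw [Submodule.mem_bot] at hp
      subst hp
      simpa only [Prod.fst_zero, Prod.snd_zero, map_zero, Prod.mk_zero_zero] using (B.W t).zero_mem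
    · refine prod_mem_of_mem_span ψ ?_ hp
      rintro q rfl
      simp only [map_zero, hψ]
      rcases (not_lt.1 hlt).eq_or_lt with rfl | hgt
      exacts [h, B.c3 i t hgt _ h]

theorem IsL2UBasis.exists_homU_iff {e : A.V0} (hA : IsL2UBasis A i e) {w : B.V0} :
    (∃ φ : HomU A B, φ.φ e = w) ↔ ((w, 0) : B.V0 × B.V0) ∈ B.W i := by
  obtain ⟨he, hsp, hW⟩ := hA
  constructor
  · rintro ⟨φ, rfl⟩
    rw [← map_zero φ.φ]
    refine φ.maps i (e, 0) ?_
    rw [hW i, if_pos le_rfl]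
    exact Submodule.subset_span (by simp)
  · intro h
    obtain ⟨ψ, hψ⟩ := exists_linearMap_eq_single he hsp w
    refine ⟨⟨ψ, fun t p hp => ?_⟩, hψ⟩
    have h0 : ((0, w) : B.V0 × B.V0) ∈ B.W t := B.c2 i t _ h
    rw [hW t] at hp
    split_ifs at hp with hle
    · refine prod_mem_of_mem_span ψ ?_ hp
      rintro q (rfl | rfl) <;> simp only [map_zero, hψ]
      · exact h0
      · rcases hle.eq_or_lt with rfl | hlt
        exacts [h, B.c1 i t hlt _ h]
    · refine prod_mem_of_mem_span ψ ?_ hp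
      rintro q rfl
      simpa only [map_zero, hψ] using h0

end UniversalProperties

namespace IsL3UBasis

variable {B : RepU k n} {j t : Fin n} {f₁ f₂ : B.V0}

theorem mem_W_of_lt (hB : IsL3UBasis B j f₁ f₂) (ht : t < j) {x y : B.V0} :
    ((x, y) : B.V0 × B.V0) ∈ B.W t ↔ ∃ c d : k, x = c • f₁ ∧ y = d • f₁ := by
  simp [hB.2.2 t, if_pos ht, mem_span_zero_prod_pair_iff]

theorem mem_W_self (hB : IsL3UBasis B j f₁ f₂) {x y : B.V0} :
    ((x, y) : B.V0 × B.V0) ∈ B.W j ↔ ∃ c d : k, x = c • f₁ ∧ y = d • f₁ + c • f₂ := by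
  simp [hB.2.2 j, mem_span_zero_prod_pair_iff]

theorem mem_W_of_gt (hB : IsL3UBasis B j f₁ f₂) (ht : j < t) {x y : B.V0} :
    ((x, y) : B.V0 × B.V0) ∈ B.W t ↔ ∃ c d : k, x = 0 ∧ y = c • f₁ + d • f₂ := by
  simp only [hB.2.2 t, if_neg (lt_asymm ht), if_neg ht.ne', mem_span_zero_prod_pair_iff, smul_zero]
  exact ⟨fun ⟨a, b, hx, hy⟩ => ⟨b, a, hx, hy⟩, fun ⟨c, d, hx, hy⟩ => ⟨d, c, hx, hy⟩⟩

theorem zero_prod_mem_W_iff (hB : IsL3UBasis B j f₁ f₂) (ht : t ≤ j) {w : B.V0} :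
    ((0, w) : B.V0 × B.V0) ∈ B.W t ↔ ∃ c : k, w = c • f₁ := by
  rcases ht.lt_or_eq with ht | rfl
  · rw [hB.mem_W_of_lt ht]
    exact ⟨fun ⟨_, d, _, hw⟩ => ⟨d, hw⟩, fun ⟨c, hw⟩ => ⟨0, c, (zero_smul k f₁).symm, hw⟩⟩
  · rw [hB.mem_W_self]
    constructor
    · rintro ⟨c, d, h0, rfl⟩
      obtain ⟨rfl, -⟩ := LinearIndependent.pair_iff.1 hB.1 c 0 (by rw [zero_smul, add_zero, ← h0])
      exact ⟨d, by rw [zero_smul, add_zero]⟩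
    · rintro ⟨c, rfl⟩
      exact ⟨0, c, (zero_smul k f₁).symm, by rw [zero_smul, add_zero]⟩

theorem prod_zero_mem_W_iff_of_lt (hB : IsL3UBasis B j f₁ f₂) (ht : t < j) {w : B.V0} :
    ((w, 0) : B.V0 × B.V0) ∈ B.W t ↔ ∃ c : k, w = c • f₁ := by
  rw [hB.mem_W_of_lt ht]
  exact ⟨fun ⟨c, _, hw, _⟩ => ⟨c, hw⟩, fun ⟨c, hw⟩ => ⟨c, 0, hw, (zero_smul k f₁).symm⟩⟩

theorem eq_zero_of_prod_zero_mem_W (hB : IsL3UBasis B j f₁ f₂) (ht : j ≤ t) {w : B.V0}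
    (h : ((w, 0) : B.V0 × B.V0) ∈ B.W t) : w = 0 := by
  rcases ht.lt_or_eq with ht | rfl
  · obtain ⟨_, _, hw, _⟩ := (hB.mem_W_of_gt ht).1 h
    exact hw
  · obtain ⟨c, d, rfl, h0⟩ := hB.mem_W_self.1 h
    obtain ⟨-, rfl⟩ := LinearIndependent.pair_iff.1 hB.1 d c h0.symm
    exact zero_smul k f₁

end IsL3UBasis

theorem hom_spaces_Un
    {k : Type} [Field k] {n : ℕ} (i j : Fin n)
    (A B A₁ A₂ : RepU k n)
    (e₁ e₂ : A.V0) (f₁ f₂ : B.V0) (e : A₁.V0) (g : A₂.V0)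
    -- `A = L_{3,i}` with basis `e₁, e₂`
    (hA : LinearIndependent k ![e₁, e₂] ∧ Submodule.span k {e₁, e₂} = ⊤ ∧
      ∀ t, A.W t =
        if t < i then Submodule.span k {((0, e₁) : A.V0 × A.V0), (e₁, 0)}
        else if t = i then Submodule.span k {((0, e₁) : A.V0 × A.V0), (e₁, e₂)}
        else Submodule.span k {((0, e₁) : A.V0 × A.V0), (0, e₂)})
    -- `B = L_{3,j}` with basis `f₁, f₂`
    (hB : LinearIndependent k ![f₁, f₂] ∧ Submodule.span k {f₁, f₂} = ⊤ ∧
      ∀ t, B.W t =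
        if t < j then Submodule.span k {((0, f₁) : B.V0 × B.V0), (f₁, 0)}
        else if t = j then Submodule.span k {((0, f₁) : B.V0 × B.V0), (f₁, f₂)}
        else Submodule.span k {((0, f₁) : B.V0 × B.V0), (0, f₂)})
    -- `A₁ = L_{1,i}` with basis `e`
    (hA₁ : e ≠ 0 ∧ Submodule.span k {e} = ⊤ ∧
      ∀ t, A₁.W t = if t < i then ⊥ else Submodule.span k {((0, e) : A₁.V0 × A₁.V0)})
    -- `A₂ = L_{2,i}` with basis `g`
    (hA₂ : g ≠ 0 ∧ Submodule.span k {g} = ⊤ ∧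
      ∀ t, A₂.W t = if t ≤ i then Submodule.span k {((0, g) : A₂.V0 × A₂.V0), (g, 0)}
        else Submodule.span k {((0, g) : A₂.V0 × A₂.V0)}) :
    -- (a) `Hom(L_{3,i}, L_{3,j})`
    ((i = j →
      ((∀ φ : HomU A B, ∃ c d : k, φ.φ e₁ = c • f₁ ∧ φ.φ e₂ = d • f₁ + c • f₂) ∧
        ∀ c d : k, ∃ φ : HomU A B, φ.φ e₁ = c • f₁ ∧ φ.φ e₂ = d • f₁ + c • f₂)) ∧
    (j < i →
      ((∀ φ : HomU A B, ∃ c d : k, φ.φ e₁ = 0 ∧ φ.φ e₂ = c • f₁ + d • f₂) ∧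
        ∀ c d : k, ∃ φ : HomU A B, φ.φ e₁ = 0 ∧ φ.φ e₂ = c • f₁ + d • f₂)) ∧
    (i < j →
      ((∀ φ : HomU A B, ∃ c d : k, φ.φ e₁ = c • f₁ ∧ φ.φ e₂ = d • f₁) ∧
        ∀ c d : k, ∃ φ : HomU A B, φ.φ e₁ = c • f₁ ∧ φ.φ e₂ = d • f₁))) ∧
    -- (b) `Hom(L_{1,i}, L_{3,j})`
    ((j < i →
      ((∀ φ : HomU A₁ B, ∃ c d : k, φ.φ e = c • f₁ + d • f₂) ∧
        ∀ c d : k, ∃ φ : HomU A₁ B, φ.φ e = c • f₁ + d • f₂)) ∧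
    (i ≤ j →
      ((∀ φ : HomU A₁ B, ∃ c : k, φ.φ e = c • f₁) ∧
        ∀ c : k, ∃ φ : HomU A₁ B, φ.φ e = c • f₁))) ∧
    -- (c) `Hom(L_{2,i}, L_{3,j})`
    ((i < j →
      ((∀ φ : HomU A₂ B, ∃ c : k, φ.φ g = c • f₁) ∧
        ∀ c : k, ∃ φ : HomU A₂ B, φ.φ g = c • f₁)) ∧
    (¬ i < j → ∀ φ : HomU A₂ B, φ.φ = 0)) := by
  have hA' : IsL3UBasis A i e₁ e₂ := hA
  have hB' : IsL3UBasis B j f₁ f₂ := hB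
  have hA₁' : IsL1UBasis A₁ i e := hA₁
  have hA₂' : IsL2UBasis A₂ i g := hA₂
  refine ⟨⟨?_, fun hji => ?_, fun hij => ?_⟩, ⟨fun hji => ?_, fun hij => ?_⟩,
    ⟨fun hij => ?_, fun hij φ => ?_⟩⟩
  · rintro rfl
    exact ⟨fun φ => hB'.mem_W_self.1 (hA'.exists_homU_iff.1 ⟨φ, rfl, rfl⟩),
      fun c d => hA'.exists_homU_iff.2 (hB'.mem_W_self.2 ⟨c, d, rfl, rfl⟩)⟩
  · exact ⟨fun φ => (hB'.mem_W_of_gt hji).1 (hA'.exists_homU_iff.1 ⟨φ, rfl, rfl⟩),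
      fun c d => hA'.exists_homU_iff.2 ((hB'.mem_W_of_gt hji).2 ⟨c, d, rfl, rfl⟩)⟩
  · exact ⟨fun φ => (hB'.mem_W_of_lt hij).1 (hA'.exists_homU_iff.1 ⟨φ, rfl, rfl⟩),
      fun c d => hA'.exists_homU_iff.2 ((hB'.mem_W_of_lt hij).2 ⟨c, d, rfl, rfl⟩)⟩
  · refine ⟨fun φ => ?_, fun c d => ?_⟩
    · obtain ⟨c, d, -, h⟩ := (hB'.mem_W_of_gt hji).1 (hA₁'.exists_homU_iff.1 ⟨φ, rfl⟩)
      exact ⟨c, d, h⟩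
    · exact hA₁'.exists_homU_iff.2 ((hB'.mem_W_of_gt hji).2 ⟨c, d, rfl, rfl⟩)
  · exact ⟨fun φ => (hB'.zero_prod_mem_W_iff hij).1 (hA₁'.exists_homU_iff.1 ⟨φ, rfl⟩),
      fun c => hA₁'.exists_homU_iff.2 ((hB'.zero_prod_mem_W_iff hij).2 ⟨c, rfl⟩)⟩
  · exact ⟨fun φ => (hB'.prod_zero_mem_W_iff_of_lt hij).1 (hA₂'.exists_homU_iff.1 ⟨φ, rfl⟩),
      fun c => hA₂'.exists_homU_iff.2 ((hB'.prod_zero_mem_W_iff_of_lt hij).2 ⟨c, rfl⟩)⟩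
  · refine LinearMap.ext_on hA₂.2.1 ?_
    rintro _ rfl
    exact hB'.eq_zero_of_prod_zero_mem_W (not_lt.1 hij) (hA₂'.exists_homU_iff.1 ⟨φ, rfl⟩)
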